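/- (Upper estimate of the inner-product sum, 0 ≤ q < 1) Suppose 0 ≤ q < 1. For all natural numbers r, s, r', s', k with r + s = r' + s' and r ≥ r', one has ∑_{i=0}^{r'} q^{(r-i)(r'-i) + k(r-i) + k(r'-i)}·[r']_q!·[s']_q!·binom(r,i)_q·binom(s,r'-i)_q ≤ q^{k(r-r')}·[r+s]_q!, where terms with i > r or r' - i > s vanish since the corresponding q-binomial coefficient is 0. -/

import Mathlib

/-!
Up to the factor `[r']_q! [s']_q!`, the sum is dominated termwise by
`q^{k(r-r')} · q^{(r-i)(r'-i)} binom(r,i)_q binom(s,r'-i)_q`, because `r - i ≥ r - r'` and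
`0 ≤ q ≤ 1`. By the q-Vandermonde identity the dominating terms sum to
`q^{k(r-r')} binom(r+s,r')_q`, and `binom(r+s,r')_q [r']_q! [s']_q! = [r+s]_q!`.
-/

/-- The q-integer `[n]_q = (1 - q^n)/(1 - q)`. -/
noncomputable def qInt (q : ℝ) (n : ℕ) : ℝ := (1 - q ^ n) / (1 - q)

/-- The q-factorial `[n]_q! = [1]_q ⋯ [n]_q`, with `[0]_q! = 1`. -/
noncomputable def qFact (q : ℝ) : ℕ → ℝ
  | 0 => 1
  | n + 1 => qFact q n * qInt q (n + 1)

/-- The q-binomial coefficient `binom(n,m)_q`, with value `0` when `m > n`. -/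
noncomputable def qBinom (q : ℝ) (n m : ℕ) : ℝ :=
  if m ≤ n then qFact q n / (qFact q m * qFact q (n - m)) else 0

open Finset

variable {q : ℝ}

lemma qInt_zero : qInt q 0 = 0 := by
  simp [qInt]

lemma qInt_add (hq : q ≠ 1) (a b : ℕ) : qInt q (a + b) = qInt q a + q ^ a * qInt q b := by
  have : 1 - q ≠ 0 := sub_ne_zero.mpr hq.symm
  unfold qInt
  field_simp
  ring

lemma qFact_succ (n : ℕ) : qFact q (n + 1) = qFact q n * qInt q (n + 1) := rfl

lemma qInt_pos (hq : |q| < 1) {n : ℕ} (hn : n ≠ 0) : 0 < qInt q n := by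
  have hpow : q ^ n < 1 := (le_abs_self _).trans_lt <| by
    rw [abs_pow]
    exact pow_lt_one₀ (abs_nonneg q) hq hn
  exact div_pos (sub_pos.mpr hpow) (sub_pos.mpr (abs_lt.mp hq).2)

lemma qFact_pos (hq : |q| < 1) (n : ℕ) : 0 < qFact q n := by
  induction n with
  | zero => exact one_pos
  | succ n ih => exact mul_pos ih (qInt_pos hq n.succ_ne_zero)

lemma qBinom_of_lt {n m : ℕ} (h : n < m) : qBinom q n m = 0 := by
  simp [qBinom, Nat.not_le.mpr h]

lemma qBinom_nonneg (hq : |q| < 1) (n m : ℕ) : 0 ≤ qBinom q n m := by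
  unfold qBinom
  split
  · have := qFact_pos hq n
    have := qFact_pos hq m
    have := qFact_pos hq (n - m)
    positivity
  · exact le_rfl

lemma qBinom_mul_qFact_mul_qFact (hq : |q| < 1) {n m : ℕ} (h : m ≤ n) :
    qBinom q n m * (qFact q m * qFact q (n - m)) = qFact q n := by
  have := (qFact_pos hq m).ne'
  have := (qFact_pos hq (n - m)).ne'
  rw [qBinom, if_pos h]
  field_simp

lemma qBinom_zero_right (hq : |q| < 1) (n : ℕ) : qBinom q n 0 = 1 := by
  simpa [qFact, (qFact_pos hq n).ne'] using qBinom_mul_qFact_mul_qFact hq (Nat.zero_le n)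

lemma qBinom_succ_mul_qFact_mul_qFact (hq : |q| < 1) {n t : ℕ} (h : t ≤ n) :
    qBinom q n (t + 1) * (qFact q (t + 1) * qFact q (n - t)) = qFact q n * qInt q (n - t) := by
  rcases h.lt_or_eq with hlt | rfl
  · obtain ⟨d, rfl⟩ := Nat.exists_eq_add_of_lt hlt
    have hd : t + d + 1 - t = d + 1 := by omega
    have hB := qBinom_mul_qFact_mul_qFact hq (show t + 1 ≤ t + d + 1 by omega)
    rw [show t + d + 1 - (t + 1) = d by omega] at hB
    rw [hd, qFact_succ d, ← hB]
    ring
  · rw [qBinom_of_lt t.lt_succ_self, Nat.sub_self, qInt_zero]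
    ring

lemma qBinom_succ_succ (hq : |q| < 1) (n t : ℕ) :
    qBinom q (n + 1) (t + 1) = q ^ (n - t) * qBinom q n t + qBinom q n (t + 1) := by
  rcases lt_or_ge n t with hnt | htn
  · rw [qBinom_of_lt (by omega), qBinom_of_lt hnt, qBinom_of_lt (by omega)]
    ring
  have hD : qFact q (t + 1) * qFact q (n - t) ≠ 0 :=
    (mul_pos (qFact_pos hq _) (qFact_pos hq _)).ne'
  apply mul_right_cancel₀ hD
  have hInt : qInt q (n + 1) = qInt q (n - t) + q ^ (n - t) * qInt q (t + 1) := by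
    rw [← qInt_add (abs_lt.mp hq).2.ne, show n - t + (t + 1) = n + 1 by omega]
  calc qBinom q (n + 1) (t + 1) * (qFact q (t + 1) * qFact q (n - t))
      = qFact q n * qInt q (n + 1) := by
        have hB := qBinom_mul_qFact_mul_qFact hq (show t + 1 ≤ n + 1 by omega)
        rw [Nat.add_sub_add_right] at hB
        rw [hB, qFact_succ]
    _ = q ^ (n - t) * (qBinom q n t * (qFact q t * qFact q (n - t))) * qInt q (t + 1)
          + qBinom q n (t + 1) * (qFact q (t + 1) * qFact q (n - t)) := by
        rw [qBinom_mul_qFact_mul_qFact hq htn, qBinom_succ_mul_qFact_mul_qFact hq htn, hInt]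
        ring
    _ = (q ^ (n - t) * qBinom q n t + qBinom q n (t + 1)) *
          (qFact q (t + 1) * qFact q (n - t)) := by
        rw [qFact_succ t]
        ring

theorem qBinom_add_eq (hq : |q| < 1) (r s t : ℕ) :
    qBinom q (r + s) t =
      ∑ p ∈ antidiagonal t, q ^ ((r - p.1) * p.2) * qBinom q r p.1 * qBinom q s p.2 := by
  induction s generalizing t with
  | zero =>
    rw [sum_eq_single (t, 0)]
    · simp [qBinom_zero_right hq]
    · rintro ⟨i, j⟩ hij hne
      have hj : 0 < j := by
        rw [HasAntidiagonal.mem_antidiagonal] at hij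
        grind
      rw [qBinom_of_lt hj, mul_zero]
    · simp
  | succ s ih =>
    cases t with
    | zero => simp [qBinom_zero_right hq]
    | succ t =>
      -- a term with `i > r` or `j > s` vanishes; otherwise the exponents add up to `r + s - t`
      have hshift : ∀ p ∈ antidiagonal t,
          q ^ ((r - p.1) * (p.2 + 1)) * qBinom q r p.1 * (q ^ (s - p.2) * qBinom q s p.2) =
            q ^ (r + s - t) * (q ^ ((r - p.1) * p.2) * qBinom q r p.1 * qBinom q s p.2) := by
        rintro ⟨i, j⟩ hij
        rw [HasAntidiagonal.mem_antidiagonal] at hij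
        dsimp only
        rcases lt_or_ge r i with hri | hir
        · simp [qBinom_of_lt hri]
        rcases lt_or_ge s j with hsj | hjs
        · simp [qBinom_of_lt hsj]
        have hexp : (r - i) * (j + 1) + (s - j) = r + s - t + (r - i) * j := by
          rw [Nat.mul_succ]
          omega
        calc _ = q ^ ((r - i) * (j + 1) + (s - j)) * qBinom q r i * qBinom q s j := by
              rw [pow_add]; ring
          _ = _ := by rw [hexp, pow_add]; ring
      calc qBinom q (r + (s + 1)) (t + 1)
          = q ^ (r + s - t) * qBinom q (r + s) t + qBinom q (r + s) (t + 1) := by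
            rw [← add_assoc, qBinom_succ_succ hq]
        _ = q ^ (r + s - t) *
              ∑ p ∈ antidiagonal t, q ^ ((r - p.1) * p.2) * qBinom q r p.1 * qBinom q s p.2
            + (qBinom q r (t + 1) + ∑ p ∈ antidiagonal t,
                q ^ ((r - p.1) * (p.2 + 1)) * qBinom q r p.1 * qBinom q s (p.2 + 1)) := by
            rw [ih t, ih (t + 1), Nat.sum_antidiagonal_succ']
            simp [qBinom_zero_right hq]
        _ = qBinom q r (t + 1) + ∑ p ∈ antidiagonal t, q ^ ((r - p.1) * (p.2 + 1)) *
              qBinom q r p.1 * (q ^ (s - p.2) * qBinom q s p.2 + qBinom q s (p.2 + 1)) := by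
            rw [mul_sum, ← sum_congr rfl hshift]
            simp only [mul_add, sum_add_distrib]
            ring
        _ = ∑ p ∈ antidiagonal (t + 1),
              q ^ ((r - p.1) * p.2) * qBinom q r p.1 * qBinom q (s + 1) p.2 := by
            rw [Nat.sum_antidiagonal_succ']
            simp [qBinom_zero_right hq, qBinom_succ_succ hq]

lemma pow_inner_exponent_mul_le (hq₁ : 0 ≤ q) (hq₂ : q < 1) (k : ℕ) {r r' i : ℕ}
    (hi : i ≤ r') {c : ℝ} (hc : 0 ≤ c) :
    q ^ ((r - i) * (r' - i) + k * (r - i) + k * (r' - i)) * c ≤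
      q ^ (k * (r - r')) * (q ^ ((r - i) * (r' - i)) * c) := by
  rw [← mul_assoc, ← pow_add]
  refine mul_le_mul_of_nonneg_right (pow_le_pow_of_le_one hq₁ hq₂.le ?_) hc
  have : k * (r - r') ≤ k * (r - i) := Nat.mul_le_mul_left k (by omega)
  omega

theorem inner_sum_upper_nonneg_general (q : ℝ) (hq₁ : 0 ≤ q) (hq₂ : q < 1)
    (r s r' s' k : ℕ) (hsum : r + s = r' + s') :
    ∑ i ∈ Finset.range (r' + 1),
      q ^ ((r - i) * (r' - i) + k * (r - i) + k * (r' - i)) *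
        qFact q r' * qFact q s' * qBinom q r i * qBinom q s (r' - i) ≤
    q ^ (k * (r - r')) * qFact q (r + s) := by
  have hq : |q| < 1 := abs_lt.mpr ⟨by linarith, hq₂⟩
  have hF := qFact_pos hq r'
  have hF' := qFact_pos hq s'
  calc _ ≤ ∑ i ∈ range (r' + 1), q ^ (k * (r - r')) * (q ^ ((r - i) * (r' - i)) *
          (qFact q r' * qFact q s' * qBinom q r i * qBinom q s (r' - i))) := by
        refine sum_le_sum fun i hi => ?_
        have hB := qBinom_nonneg hq r i
        have hB' := qBinom_nonneg hq s (r' - i)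
        have hc : 0 ≤ qFact q r' * qFact q s' * qBinom q r i * qBinom q s (r' - i) := by
          positivity
        simpa only [mul_assoc] using
          pow_inner_exponent_mul_le hq₁ hq₂ k (Nat.lt_succ_iff.mp (mem_range.mp hi)) hc
    _ = q ^ (k * (r - r')) * (qBinom q (r + s) r' * (qFact q r' * qFact q s')) := by
        rw [qBinom_add_eq hq, Nat.sum_antidiagonal_eq_sum_range_succ
          (fun i j => q ^ ((r - i) * j) * qBinom q r i * qBinom q s j), sum_mul, mul_sum]
        exact sum_congr rfl fun i _ => by ring
    _ = q ^ (k * (r - r')) * qFact q (r + s) := by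
        rw [show s' = r + s - r' by omega, qBinom_mul_qFact_mul_qFact hq (by omega)]

/-- Upper estimate of the inner-product sum for `0 ≤ q < 1`. -/
theorem inner_sum_upper_nonneg (q : ℝ) (hq₁ : 0 ≤ q) (hq₂ : q < 1)
    (r s r' s' k : ℕ) (hsum : r + s = r' + s') (hr : r' ≤ r) :
    ∑ i ∈ Finset.range (r' + 1),
      q ^ ((r - i) * (r' - i) + k * (r - i) + k * (r' - i)) *
        qFact q r' * qFact q s' * qBinom q r i * qBinom q s (r' - i) ≤
    q ^ (k * (r - r')) * qFact q (r + s) :=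
  inner_sum_upper_nonneg_general q hq₁ hq₂ r s r' s' k hsum
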